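/- arXiv:0709.2600 — 3 statements merged into one kernel-verified Lean document; each statement's English description precedes it below -/
import Mathlib

section
/- Suppose that for μ-almost all t ∈ M, the semigroup (θ_k) is weakly mixing along the sequence (κ_n(t))_{n∈ℕ}, i.e. (1/n)Σ_{i=0}^{n-1} |P(A ∩ θ_{κ_i(t)}^{-1}B) − P(A)P(B)| → 0 for all A, B ∈ 𝓕. If τ is ergodic with respect to μ, then the skew product S is ergodic with respect to μ ⊗ P. -/
/-!
Let `S(t, ω) = (τ t, θ_{κ t} ω)` and let `E` be an `S`-invariant set with fibres
`E_t = {ω | (t, ω) ∈ E}`. Invariance says `θ_{κ_n(t)}⁻¹ E_{τⁿ t} = E_t`, so `t ↦ P(E_t)` is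
`τ`-invariant and, by ergodicity of `τ`, a.e. equal to a constant `c`. Given `B`, condition (C1)
applied to `A = E_t` turns into `(1/n) ∑_{i<n} |P(E_{τⁱ t} ∩ B) - c P(B)| → 0`: the Birkhoff
averages of the bounded function `t ↦ |P(E_t ∩ B) - c P(B)|` tend to zero a.e. Since `τ`
preserves `μ`, these averages all have the integral of that function, which must therefore vanish
by dominated convergence. Hence `P(E_t ∩ B) = c P(B)` for a.e. `t`, so `E` is independent of every
rectangle, hence of itself, and has measure `0` or `1`.
-/

open MeasureTheory Filter Finset ProbabilityTheory Topology Function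

theorem norm_birkhoffAverage_le {α E : Type*} {f : α → α} [NormedAddCommGroup E] [NormedSpace ℝ E]
    {g : α → E} {C : ℝ} (hg : ∀ x, ‖g x‖ ≤ C) (n : ℕ) (x : α) :
    ‖birkhoffAverage ℝ f g n x‖ ≤ C := by
  rcases n.eq_zero_or_pos with rfl | hn
  · simpa using (norm_nonneg _).trans (hg x)
  have hsum : ‖birkhoffSum f g n x‖ ≤ n * C :=
    calc ‖birkhoffSum f g n x‖ ≤ ∑ k ∈ range n, ‖g (f^[k] x)‖ := norm_sum_le _ _
      _ ≤ ∑ _k ∈ range n, C := sum_le_sum fun k _ => hg _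
      _ = n * C := by simp
  rw [birkhoffAverage, norm_smul, norm_inv, Real.norm_natCast, inv_mul_le_iff₀ (by positivity)]
  exact hsum

section BirkhoffAverage

variable {α : Type*} [MeasurableSpace α] {μ : Measure α} {f : α → α}

theorem MeasureTheory.MeasurePreserving.integral_birkhoffSum (hf : MeasurePreserving f μ μ)
    {g : α → ℝ} (hg : Integrable g μ) (n : ℕ) :
    ∫ x, birkhoffSum f g n x ∂μ = n * ∫ x, g x ∂μ := by
  have hcomp (k : ℕ) : ∫ x, g (f^[k] x) ∂μ = ∫ x, g x ∂μ := by
    rw [← integral_map (hf.iterate k).aemeasurable (by rw [(hf.iterate k).map_eq]; exact hg.1),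
      (hf.iterate k).map_eq]
  have hint (k : ℕ) : Integrable (fun x => g (f^[k] x)) μ :=
    (hf.iterate k).integrable_comp_of_integrable hg
  unfold birkhoffSum
  rw [integral_finsetSum _ fun k _ => hint k]
  simp [hcomp]

theorem MeasureTheory.MeasurePreserving.integral_birkhoffAverage (hf : MeasurePreserving f μ μ)
    {g : α → ℝ} (hg : Integrable g μ) {n : ℕ} (hn : n ≠ 0) :
    ∫ x, birkhoffAverage ℝ f g n x ∂μ = ∫ x, g x ∂μ := by
  simp only [birkhoffAverage, smul_eq_mul]
  rw [integral_const_mul, hf.integral_birkhoffSum hg, ← mul_assoc,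
    inv_mul_cancel₀ (Nat.cast_ne_zero.mpr hn), one_mul]

theorem MeasureTheory.MeasurePreserving.integral_eq_zero_of_tendsto_birkhoffAverage
    [IsFiniteMeasure μ] (hf : MeasurePreserving f μ μ) {g : α → ℝ} (hgm : Measurable g)
    {C : ℝ} (hgC : ∀ x, ‖g x‖ ≤ C)
    (hlim : ∀ᵐ x ∂μ, Tendsto (fun n => birkhoffAverage ℝ f g n x) atTop (𝓝 0)) :
    ∫ x, g x ∂μ = 0 := by
  have hg : Integrable g μ := .of_bound hgm.aestronglyMeasurable C (ae_of_all _ hgC)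
  have hmeas (n : ℕ) : Measurable (birkhoffAverage ℝ f g n) :=
    (Finset.measurable_sum _ fun k _ => hgm.comp (hf.measurable.iterate k)).const_smul
      ((n : ℝ)⁻¹)
  have hdct := tendsto_integral_of_dominated_convergence (fun _ => C)
    (fun n => (hmeas n).aestronglyMeasurable) (integrable_const C)
    (fun n => ae_of_all _ (norm_birkhoffAverage_le hgC n)) hlim
  rw [integral_zero] at hdct
  exact tendsto_nhds_unique tendsto_const_nhds <| hdct.congr' <|
    (eventually_ne_atTop 0).mono fun n hn => hf.integral_birkhoffAverage hg hn

end BirkhoffAverage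

theorem preErgodic_of_indepSet_self {α : Type*} [MeasurableSpace α] {μ : Measure α}
    [IsProbabilityMeasure μ] {f : α → α}
    (h : ∀ s, MeasurableSet s → f ⁻¹' s = s → IndepSet s s μ) : PreErgodic f μ := by
  refine ⟨fun s hs hfs => eventuallyConst_set'.2 ?_⟩
  rcases measure_eq_zero_or_one_of_indepSet_self (h s hs hfs) with h0 | h1
  · exact .inl (ae_eq_empty.2 h0)
  · exact .inr ((ae_eq_univ_iff_measure_eq hs.nullMeasurableSet).2 (h1.trans measure_univ.symm))

section ProductMeasure

variable {M Ω : Type*} [MeasurableSpace M] [MeasurableSpace Ω] {μ : Measure M} {P : Measure Ω}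
  {E : Set (M × Ω)} {c : ENNReal}

theorem restrict_prod_eq_smul_of_ae_measure_fiber_inter [IsFiniteMeasure μ] [IsFiniteMeasure P]
    (hE : MeasurableSet E)
    (h : ∀ B, MeasurableSet B → ∀ᵐ t ∂μ, P (Prod.mk t ⁻¹' E ∩ B) = c * P B) :
    (μ.prod P).restrict E = c • μ.prod P := by
  classical
  refine Measure.ext_prod fun {A B} hA hB => ?_
  have hfiber (t : M) :
      P (Prod.mk t ⁻¹' (A ×ˢ B ∩ E)) = A.indicator (fun t => P (Prod.mk t ⁻¹' E ∩ B)) t := by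
    rw [Set.preimage_inter, Set.mk_preimage_prod_right_eq_if]
    by_cases ht : t ∈ A <;> simp [ht, Set.inter_comm]
  rw [Measure.restrict_apply (hA.prod hB), Measure.prod_apply ((hA.prod hB).inter hE),
    Measure.smul_apply, Measure.prod_prod, smul_eq_mul]
  calc ∫⁻ t, P (Prod.mk t ⁻¹' (A ×ˢ B ∩ E)) ∂μ
      = ∫⁻ t in A, P (Prod.mk t ⁻¹' E ∩ B) ∂μ := by
        simp_rw [hfiber]; exact lintegral_indicator hA _
    _ = ∫⁻ _ in A, c * P B ∂μ := lintegral_congr_ae (ae_restrict_of_ae (h B hB))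
    _ = c * (μ A * P B) := by rw [setLIntegral_const, mul_comm (μ A), mul_assoc]

theorem indepSet_self_of_ae_measure_fiber_inter [IsProbabilityMeasure μ] [IsProbabilityMeasure P]
    (hE : MeasurableSet E)
    (h : ∀ B, MeasurableSet B → ∀ᵐ t ∂μ, P (Prod.mk t ⁻¹' E ∩ B) = c * P B) :
    IndepSet E E (μ.prod P) := by
  have hres := restrict_prod_eq_smul_of_ae_measure_fiber_inter hE h
  have hc : (μ.prod P) E = c := by
    simpa using congrArg (fun ν : Measure (M × Ω) => ν Set.univ) hres
  rw [indepSet_iff_measure_inter_eq_mul hE hE (μ.prod P), Set.inter_self]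
  simpa [Measure.restrict_apply hE, hc] using congrArg (fun ν : Measure (M × Ω) => ν E) hres

end ProductMeasure

def IsWeaklyMixingAlong {Ω K : Type*} [MeasurableSpace Ω] (P : Measure Ω) (θ : K → Ω → Ω)
    (s : ℕ → K) : Prop :=
  ∀ A B : Set Ω, MeasurableSet A → MeasurableSet B →
    Tendsto (fun n : ℕ => (n : ℝ)⁻¹ * ∑ i ∈ range n,
      |(P (A ∩ θ (s i) ⁻¹' B)).toReal - (P A).toReal * (P B).toReal|) atTop (𝓝 0)

def skewProduct {M Ω K : Type*} (τ : M → M) (θ : K → Ω → Ω) (κ : M → K) (p : M × Ω) : M × Ω :=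
  (τ p.1, θ (κ p.1) p.2)

section SkewProduct

variable {M Ω K : Type*} [MeasurableSpace M] [MeasurableSpace Ω]
  {μ : Measure M} {P : Measure Ω} {τ : M → M} {θ : K → Ω → Ω} {κ : M → K} {E : Set (M × Ω)}

omit [MeasurableSpace M] [MeasurableSpace Ω] in
theorem skewProduct_iterate_apply [AddCommMonoid K] (hθ0 : θ 0 = id)
    (hθadd : ∀ k l, θ k ∘ θ l = θ (k + l)) (n : ℕ) (t : M) (ω : Ω) :
    (skewProduct τ θ κ)^[n] (t, ω) = (τ^[n] t, θ (birkhoffSum τ κ n t) ω) := by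
  induction n with
  | zero => simp [hθ0]
  | succ n ih =>
    rw [iterate_succ_apply', ih, iterate_succ_apply', birkhoffSum_succ,
      add_comm (birkhoffSum τ κ n t), ← hθadd]
    rfl

omit [MeasurableSpace M] [MeasurableSpace Ω] in
theorem preimage_fiber_iterate_eq_fiber [AddCommMonoid K] (hθ0 : θ 0 = id)
    (hθadd : ∀ k l, θ k ∘ θ l = θ (k + l)) (hE : skewProduct τ θ κ ⁻¹' E = E) (n : ℕ) (t : M) :
    θ (birkhoffSum τ κ n t) ⁻¹' (Prod.mk (τ^[n] t) ⁻¹' E) = Prod.mk t ⁻¹' E := by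
  ext ω
  simpa [skewProduct_iterate_apply hθ0 hθadd] using
    Set.ext_iff.mp (IsFixedPt.preimage_iterate hE n) (t, ω)

theorem exists_ae_measure_fiber_eq_const [SFinite P] (hτ : Ergodic τ μ)
    (hθmp : ∀ k, MeasurePreserving (θ k) P P) (hEm : MeasurableSet E)
    (hE : skewProduct τ θ κ ⁻¹' E = E) : ∃ c, ∀ᵐ t ∂μ, P (Prod.mk t ⁻¹' E) = c := by
  have hinv : (fun t => P (Prod.mk t ⁻¹' E)) ∘ τ = fun t => P (Prod.mk t ⁻¹' E) := by
    funext t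
    have hfiber : θ (κ t) ⁻¹' (Prod.mk (τ t) ⁻¹' E) = Prod.mk t ⁻¹' E :=
      congrArg (Prod.mk t ⁻¹' ·) hE
    rw [comp_apply, ← hfiber,
      (hθmp (κ t)).measure_preimage (measurable_prodMk_left hEm).nullMeasurableSet]
  exact hτ.ae_eq_const_of_ae_eq_comp₀ (measurable_measure_prodMk_left hEm).nullMeasurable
    (.of_eq hinv)

theorem tendsto_birkhoffAverage_abs_measure_fiber_inter_sub [AddCommMonoid K] (hθ0 : θ 0 = id)
    (hθadd : ∀ k l, θ k ∘ θ l = θ (k + l)) (hθmp : ∀ k, MeasurePreserving (θ k) P P)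
    (hEm : MeasurableSet E) (hE : skewProduct τ θ κ ⁻¹' E = E) {t : M}
    (ht : IsWeaklyMixingAlong P θ fun i => birkhoffSum τ κ i t) {B : Set Ω}
    (hB : MeasurableSet B) :
    Tendsto (fun n => birkhoffAverage ℝ τ (fun s =>
      |(P (Prod.mk s ⁻¹' E ∩ B)).toReal - (P (Prod.mk t ⁻¹' E)).toReal * (P B).toReal|) n t)
      atTop (𝓝 0) := by
  refine (ht (Prod.mk t ⁻¹' E) B (measurable_prodMk_left hEm) hB).congr fun n => ?_
  rw [birkhoffAverage, birkhoffSum, smul_eq_mul]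
  refine congrArg _ (sum_congr rfl fun i _ => ?_)
  have hinter : Prod.mk t ⁻¹' E ∩ θ (birkhoffSum τ κ i t) ⁻¹' B
      = θ (birkhoffSum τ κ i t) ⁻¹' (Prod.mk (τ^[i] t) ⁻¹' E ∩ B) := by
    rw [Set.preimage_inter, preimage_fiber_iterate_eq_fiber hθ0 hθadd hE i t]
  rw [hinter, (hθmp _).measure_preimage ((measurable_prodMk_left hEm).inter hB).nullMeasurableSet]

theorem ae_measure_fiber_inter_eq_mul [AddCommMonoid K] [IsProbabilityMeasure μ]
    [IsProbabilityMeasure P] (hθ0 : θ 0 = id) (hθadd : ∀ k l, θ k ∘ θ l = θ (k + l))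
    (hθmp : ∀ k, MeasurePreserving (θ k) P P) (hτ : MeasurePreserving τ μ μ)
    (hmix : ∀ᵐ t ∂μ, IsWeaklyMixingAlong P θ fun i => birkhoffSum τ κ i t)
    (hEm : MeasurableSet E) (hE : skewProduct τ θ κ ⁻¹' E = E) {c : ENNReal}
    (hc : ∀ᵐ t ∂μ, P (Prod.mk t ⁻¹' E) = c) {B : Set Ω} (hB : MeasurableSet B) :
    ∀ᵐ t ∂μ, P (Prod.mk t ⁻¹' E ∩ B) = c * P B := by
  obtain ⟨t₀, rfl⟩ := hc.exists
  set g : M → ℝ := fun s =>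
    |(P (Prod.mk s ⁻¹' E ∩ B)).toReal - (P (Prod.mk t₀ ⁻¹' E)).toReal * (P B).toReal|
  have hgm : Measurable g := by
    have : Measurable fun s => P (Prod.mk s ⁻¹' E ∩ B) := by
      simp_rw [← Measure.restrict_apply' hB]
      exact measurable_measure_prodMk_left hEm
    exact (this.ennreal_toReal.sub measurable_const).abs
  have hg1 (s : M) : ‖g s‖ ≤ 1 := by
    rw [Real.norm_eq_abs, abs_abs]
    exact abs_sub_le_of_nonneg_of_le ENNReal.toReal_nonneg measureReal_le_one
      (by positivity) (mul_le_one₀ measureReal_le_one ENNReal.toReal_nonneg measureReal_le_one)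
  have hint : ∫ s, g s ∂μ = 0 := by
    refine hτ.integral_eq_zero_of_tendsto_birkhoffAverage hgm hg1 ?_
    filter_upwards [hmix, hc] with t ht hct
    have := tendsto_birkhoffAverage_abs_measure_fiber_inter_sub hθ0 hθadd hθmp hEm hE ht hB
    rwa [hct] at this
  have hg0 : g =ᵐ[μ] 0 := (integral_eq_zero_iff_of_nonneg (fun _ => abs_nonneg _)
    (.of_bound hgm.aestronglyMeasurable 1 (ae_of_all _ hg1))).mp hint
  filter_upwards [hg0] with t ht
  rw [← ENNReal.toReal_eq_toReal_iff' (measure_ne_top _ _)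
    (ENNReal.mul_ne_top (measure_ne_top _ _) (measure_ne_top _ _)), ENNReal.toReal_mul]
  exact sub_eq_zero.mp (abs_eq_zero.mp ht)

theorem measurePreserving_skewProduct [MeasurableSpace K] [Countable K]
    [MeasurableSingletonClass K] [SFinite μ] [SFinite P] (hτ : MeasurePreserving τ μ μ)
    (hθmp : ∀ k, MeasurePreserving (θ k) P P) (hκ : Measurable κ) :
    MeasurePreserving (skewProduct τ θ κ) (μ.prod P) (μ.prod P) := by
  have hθκ : Measurable (uncurry fun t => θ (κ t)) :=
    (measurable_from_prod_countable_left (f := fun q : Ω × K => θ q.2 q.1)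
      fun k => (hθmp k).measurable).comp (measurable_snd.prodMk (hκ.comp measurable_fst))
  exact hτ.skew_product hθκ (ae_of_all _ fun t => (hθmp (κ t)).map_eq)

end SkewProduct

theorem skew_product_ergodic_general
    {M Ω : Type*} [MeasurableSpace M] [MeasurableSpace Ω] {d : ℕ}
    (μ : Measure M) (P : Measure Ω) [IsProbabilityMeasure μ] [IsProbabilityMeasure P]
    (θ : (Fin d → ℕ) → Ω → Ω)
    (hθ0 : θ 0 = id)
    (hθadd : ∀ k l : Fin d → ℕ, θ k ∘ θ l = θ (k + l))
    (hθmp : ∀ k, MeasurePreserving (θ k) P P)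
    (τ : M → M)
    (κ : M → Fin d → ℕ) (hκ : Measurable κ)
    -- condition (C1): for μ-a.e. t, `(θ_k)` is weakly mixing along the sequence `κ_n(t)`
    (hC1 : ∀ᵐ t ∂μ, ∀ A B : Set Ω, MeasurableSet A → MeasurableSet B →
      Tendsto (fun n : ℕ => (n : ℝ)⁻¹ * ∑ i ∈ Finset.range n,
          |(P (A ∩ θ (∑ j ∈ Finset.range i, κ (τ^[j] t)) ⁻¹' B)).toReal
            - (P A).toReal * (P B).toReal|) atTop (nhds 0))
    (hergτ : Ergodic τ μ) :
    Ergodic (fun p : M × Ω => (τ p.1, θ (κ p.1) p.2)) (μ.prod P) := by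
  refine ⟨measurePreserving_skewProduct hergτ.toMeasurePreserving hθmp hκ,
    preErgodic_of_indepSet_self fun E hEm hE => ?_⟩
  obtain ⟨c, hc⟩ := exists_ae_measure_fiber_eq_const hergτ hθmp hEm hE
  exact indepSet_self_of_ae_measure_fiber_inter hEm fun B hB =>
    ae_measure_fiber_inter_eq_mul hθ0 hθadd hθmp hergτ.toMeasurePreserving hC1 hEm hE hc hB

/-- under condition (C1), if `τ` is ergodic then the skew product `S` is
ergodic with respect to `μ ⊗ P`. -/
theorem skew_product_ergodic
    {M Ω : Type*} [MeasurableSpace M] [MeasurableSpace Ω] {d : ℕ}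
    (μ : Measure M) (P : Measure Ω) [IsProbabilityMeasure μ] [IsProbabilityMeasure P]
    (θ : (Fin d → ℕ) → Ω → Ω)
    (hθ0 : θ 0 = id)
    (hθadd : ∀ k l : Fin d → ℕ, θ k ∘ θ l = θ (k + l))
    (hθmeas : ∀ k, Measurable (θ k))
    (hθmp : ∀ k, MeasurePreserving (θ k) P P)
    (τ : M → M) (hτ : MeasurePreserving τ μ μ)
    (κ : M → Fin d → ℕ) (hκ : Measurable κ)
    -- condition (C1): for μ-a.e. t, `(θ_k)` is weakly mixing along the sequence `κ_n(t)`
    (hC1 : ∀ᵐ t ∂μ, ∀ A B : Set Ω, MeasurableSet A → MeasurableSet B →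
      Tendsto (fun n : ℕ => (n : ℝ)⁻¹ * ∑ i ∈ Finset.range n,
          |(P (A ∩ θ (∑ j ∈ Finset.range i, κ (τ^[j] t)) ⁻¹' B)).toReal
            - (P A).toReal * (P B).toReal|) atTop (nhds 0))
    (hergτ : Ergodic τ μ) :
    Ergodic (fun p : M × Ω => (τ p.1, θ (κ p.1) p.2)) (μ.prod P) :=
  skew_product_ergodic_general μ P θ hθ0 hθadd hθmp τ κ hκ hC1 hergτ
end

section
/- Let τ be periodic with period q and F ∈ L^1(μ ⊗ P). If for μ-almost every t the transformation θ_{κ_q(t)} is ergodic with respect to P, then for μ-a.e. t, the averages (1/n)Σ_{i=0}^{n-1} F(τ^i(t), θ_{κ_i(t)}ω) converge, P-almost surely and in L^1(P), to the constant (1/q)Σ_{ν=0}^{q−1} E_P[F(τ^ν(t), ·)]. -/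
/-!
Fix `t` and put `a i = F (τ^[i] t, θ (κ_i t) ·)`. Since `τ^[q] = id` and `θ` is a semigroup
action, `a (i + q) = a i ∘ θ (κ_q t)`, so the sum of the first `m * q` terms is the Birkhoff sum
of length `m` of `G = ∑_{r<q} a r` for the ergodic map `θ (κ_q t)`, and the remaining fewer than
`q` terms are negligible after division by `n`. Birkhoff's ergodic theorem, both pointwise and in
`L¹`, then gives convergence to `(1/q) ∫ G = (1/q) ∑_{r<q} E_P[F (τ^[r] t, ·)]`.

Birkhoff's theorem is derived from Hopf's maximal ergodic theorem: if `∫ g < 0`, the set where the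
Birkhoff sums of `g` are unbounded above is invariant, so by ergodicity it is null or conull, and
the maximal inequality `∫_{max_{k ≤ N} S_k g > 0} g ≥ 0` excludes the second case.
-/

open MeasureTheory Filter Finset Topology

lemma MeasureTheory.MeasurePreserving.integral_comp_of_aestronglyMeasurable {α β E : Type*}
    [MeasurableSpace α] [MeasurableSpace β] [NormedAddCommGroup E] [NormedSpace ℝ E]
    {μ : Measure α} {ν : Measure β} {f : α → β} (hf : MeasurePreserving f μ ν) {g : β → E}
    (hg : AEStronglyMeasurable g ν) : ∫ x, g (f x) ∂μ = ∫ y, g y ∂ν := by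
  rw [← hf.map_eq] at hg ⊢
  exact (integral_map hf.aemeasurable hg).symm

lemma MeasureTheory.Integrable.exists_simpleFunc_integral_norm_sub_lt {α E : Type*}
    [MeasurableSpace α] [NormedAddCommGroup E] {μ : Measure α} {g : α → E}
    (hg : Integrable g μ) {ε : ℝ} (hε : 0 < ε) :
    ∃ s : SimpleFunc α E, Integrable s μ ∧ ∫ x, ‖g x - s x‖ ∂μ < ε := by
  obtain ⟨s, hgs, hs⟩ := (memLp_one_iff_integrable.mpr hg).exists_simpleFunc_eLpNorm_sub_lt
    ENNReal.one_ne_top (ENNReal.ofReal_pos.mpr hε).ne'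
  refine ⟨s, memLp_one_iff_integrable.mp hs, ?_⟩
  have hgs' := (hg.sub (memLp_one_iff_integrable.mp hs)).aestronglyMeasurable
  calc ∫ x, ‖g x - s x‖ ∂μ = lpNorm (g - ⇑s) 1 μ := (lpNorm_one_eq_integral_norm hgs').symm
    _ = (eLpNorm (g - ⇑s) 1 μ).toReal := (toReal_eLpNorm hgs').symm
    _ < ε := ENNReal.toReal_lt_of_lt_ofReal hgs

lemma tendsto_natCast_div_div_atTop {q : ℕ} (hq : 0 < q) :
    Tendsto (fun n : ℕ => ((n / q : ℕ) : ℝ) / n) atTop (𝓝 (q : ℝ)⁻¹) := by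
  have hq' : (0 : ℝ) < q := by exact_mod_cast hq
  have h := ((tendsto_nat_floor_div_atTop (R := ℝ)).comp
    (tendsto_natCast_atTop_atTop.atTop_div_const hq')).mul_const (q : ℝ)⁻¹
  rw [one_mul] at h
  refine h.congr' ((eventually_ne_atTop 0).mono fun n hn => ?_)
  have hn' : (n : ℝ) ≠ 0 := by exact_mod_cast hn
  simp only [Function.comp_apply, Nat.floor_div_eq_div]
  field_simp

section BirkhoffSum

variable {α : Type*} {f : α → α} {g : α → ℝ}

lemma natCast_mul_birkhoffAverage (g : α → ℝ) (n : ℕ) (x : α) :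
    n * birkhoffAverage ℝ f g n x = birkhoffSum f g n x := by
  rcases n.eq_zero_or_pos with rfl | hn
  · simp
  · rw [birkhoffAverage, smul_eq_mul, mul_inv_cancel_left₀ (by positivity)]

lemma abs_birkhoffAverage_le_birkhoffAverage_abs (n : ℕ) (x : α) :
    |birkhoffAverage ℝ f g n x| ≤ birkhoffAverage ℝ f (|g ·|) n x := by
  simp only [birkhoffAverage, birkhoffSum, smul_eq_mul, abs_mul, abs_inv, Nat.abs_cast]
  exact mul_le_mul_of_nonneg_left (abs_sum_le_sum_abs _ _) (by positivity)

lemma tendsto_inv_mul_apply_iterate_of_tendsto_birkhoffAverage {x : α} {c : ℝ}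
    (h : Tendsto (birkhoffAverage ℝ f g · x) atTop (𝓝 c)) :
    Tendsto (fun n : ℕ => (n : ℝ)⁻¹ * g (f^[n] x)) atTop (𝓝 0) := by
  have hsucc := h.comp (tendsto_add_atTop_nat 1)
  have hlim := (hsucc.sub h).add (tendsto_inv_atTop_nhds_zero_nat.mul hsucc)
  rw [sub_self, zero_mul, add_zero] at hlim
  refine hlim.congr' ((eventually_ne_atTop 0).mono fun n hn => ?_)
  have hstep := birkhoffSum_succ f g n x
  rw [← natCast_mul_birkhoffAverage, ← natCast_mul_birkhoffAverage] at hstep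
  simp only [Function.comp_apply]
  have hn' : (n : ℝ) ≠ 0 := by exact_mod_cast hn
  push_cast at hstep
  field_simp
  linarith

lemma bddAbove_birkhoffSum_apply_iff (x : α) :
    BddAbove (Set.range fun n => birkhoffSum f g n (f x)) ↔
      BddAbove (Set.range fun n => birkhoffSum f g n x) := by
  simp only [bddAbove_def, Set.forall_mem_range]
  constructor
  · rintro ⟨C, hC⟩
    refine ⟨max 0 (g x + C), fun n => ?_⟩
    rcases n with _ | n
    · simp
    · rw [birkhoffSum_succ']
      exact le_max_of_le_right (by gcongr; exact hC n)
  · rintro ⟨C, hC⟩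
    refine ⟨C - g x, fun n => ?_⟩
    have := hC (n + 1)
    rw [birkhoffSum_succ'] at this
    linarith

noncomputable def birkhoffMax (f : α → α) (g : α → ℝ) (N : ℕ) : α → ℝ :=
  (range (N + 1)).sup' nonempty_range_add_one (birkhoffSum f g)

lemma birkhoffSum_le_birkhoffMax {k N : ℕ} (hk : k ≤ N) (x : α) :
    birkhoffSum f g k x ≤ birkhoffMax f g N x := by
  rw [birkhoffMax, Finset.sup'_apply]
  exact Finset.le_sup' (fun k => birkhoffSum f g k x) (mem_range_succ_iff.mpr hk)

lemma birkhoffMax_nonneg (N : ℕ) (x : α) : 0 ≤ birkhoffMax f g N x := by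
  simpa using birkhoffSum_le_birkhoffMax (f := f) (g := g) (Nat.zero_le N) x

lemma birkhoffMax_mono : Monotone (birkhoffMax f g) := fun _ _ h =>
  Finset.sup'_mono _ (range_subset_range.mpr (Nat.succ_le_succ h)) _

lemma birkhoffMax_le_max_zero_add (N : ℕ) (x : α) :
    birkhoffMax f g N x ≤ max 0 (g x + birkhoffMax f g N (f x)) := by
  refine (Finset.sup'_apply _ _ x).trans_le (Finset.sup'_le _ _ fun k hk => ?_)
  rcases k with _ | k
  · exact le_max_left _ _
  · rw [birkhoffSum_succ']
    have hk : k ≤ N := by have := mem_range.mp hk; omega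
    exact le_max_of_le_right (by gcongr; exact birkhoffSum_le_birkhoffMax hk _)

end BirkhoffSum

section MaximalErgodic

variable {α : Type*} [MeasurableSpace α] {μ : Measure α} {f : α → α} {g : α → ℝ}

lemma Measurable.birkhoffSum (hf : Measurable f) (hg : Measurable g) (n : ℕ) :
    Measurable (birkhoffSum f g n) :=
  Finset.measurable_sum _ fun k _ => hg.comp (hf.iterate k)

lemma measurable_birkhoffMax (hf : Measurable f) (hg : Measurable g) (N : ℕ) :
    Measurable (birkhoffMax f g N) :=
  Finset.measurable_sup' _ fun k _ => hf.birkhoffSum hg k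

namespace MeasureTheory.MeasurePreserving

lemma integrable_birkhoffSum (hf : MeasurePreserving f μ μ) (hg : Integrable g μ) (n : ℕ) :
    Integrable (birkhoffSum f g n) μ :=
  integrable_finsetSum _ fun k _ => (hf.iterate k).integrable_comp_of_integrable hg

lemma integrable_birkhoffAverage (hf : MeasurePreserving f μ μ) (hg : Integrable g μ) (n : ℕ) :
    Integrable (birkhoffAverage ℝ f g n) μ :=
  (hf.integrable_birkhoffSum hg n).const_mul _

lemma integrable_birkhoffMax (hf : MeasurePreserving f μ μ) (hg : Integrable g μ) (N : ℕ) :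
    Integrable (birkhoffMax f g N) μ :=
  Finset.sup'_induction (p := (Integrable · μ)) _ _ (fun _ h₁ _ h₂ => h₁.sup h₂) fun k _ =>
    hf.integrable_birkhoffSum hg k

lemma integral_birkhoffSum_s10 (hf : MeasurePreserving f μ μ) (hg : Integrable g μ) (n : ℕ) :
    ∫ x, birkhoffSum f g n x ∂μ = n * ∫ x, g x ∂μ := by
  simp only [birkhoffSum]
  rw [integral_finsetSum (f := fun k x => g (f^[k] x)) _ fun k _ =>
    (hf.iterate k).integrable_comp_of_integrable hg]
  simp [(hf.iterate _).integral_comp_of_aestronglyMeasurable hg.1]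

lemma integral_abs_birkhoffAverage_le (hf : MeasurePreserving f μ μ) (hg : Integrable g μ)
    (n : ℕ) : ∫ x, |birkhoffAverage ℝ f g n x| ∂μ ≤ ∫ x, |g x| ∂μ := by
  calc ∫ x, |birkhoffAverage ℝ f g n x| ∂μ ≤ ∫ x, birkhoffAverage ℝ f (|g ·|) n x ∂μ :=
        integral_mono (hf.integrable_birkhoffAverage hg n).abs
          (hf.integrable_birkhoffAverage hg.abs n) (abs_birkhoffAverage_le_birkhoffAverage_abs n)
    _ = (n : ℝ)⁻¹ * (n * ∫ x, |g x| ∂μ) := by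
        simp only [birkhoffAverage, smul_eq_mul]
        rw [integral_const_mul, hf.integral_birkhoffSum_s10 hg.abs]
    _ ≤ ∫ x, |g x| ∂μ := by
        rcases n.eq_zero_or_pos with rfl | hn
        · simpa using integral_nonneg fun x => abs_nonneg (g x)
        · rw [inv_mul_cancel_left₀ (by positivity)]

theorem setIntegral_birkhoffMax_pos_nonneg (hf : MeasurePreserving f μ μ) (hgm : Measurable g)
    (hg : Integrable g μ) (N : ℕ) : 0 ≤ ∫ x in {x | 0 < birkhoffMax f g N x}, g x ∂μ := by
  set Φ := birkhoffMax f g N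
  set A := {x | 0 < Φ x}
  have hΦ : Integrable Φ μ := hf.integrable_birkhoffMax hg N
  have hΦf : Integrable (Φ ∘ f) μ := hf.integrable_comp_of_integrable hΦ
  have hA : MeasurableSet A :=
    measurableSet_lt measurable_const (measurable_birkhoffMax hf.measurable hgm N)
  have hΦA : ∫ x in A, Φ x ∂μ = ∫ x, Φ x ∂μ :=
    setIntegral_eq_integral_of_forall_compl_eq_zero fun x hx =>
      le_antisymm (not_lt.mp hx) (birkhoffMax_nonneg N x)
  calc 0 = ∫ x, Φ x ∂μ - ∫ x, Φ (f x) ∂μ := by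
        rw [hf.integral_comp_of_aestronglyMeasurable hΦ.1, sub_self]
    _ ≤ ∫ x in A, Φ x ∂μ - ∫ x in A, Φ (f x) ∂μ := by
        rw [hΦA]
        exact sub_le_sub_left (setIntegral_le_integral hΦf
          (Eventually.of_forall fun x => birkhoffMax_nonneg N (f x))) _
    _ = ∫ x in A, (Φ x - Φ (f x)) ∂μ := (integral_sub hΦ.integrableOn hΦf.integrableOn).symm
    _ ≤ ∫ x in A, g x ∂μ := by
        refine setIntegral_mono_on (hΦ.integrableOn.sub hΦf.integrableOn) hg.integrableOn hA
          fun x (hx : 0 < Φ x) => ?_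
        have := birkhoffMax_le_max_zero_add (f := f) (g := g) N x
        rcases max_cases 0 (g x + Φ (f x)) with ⟨h, _⟩ | ⟨h, _⟩ <;> linarith

end MeasureTheory.MeasurePreserving

end MaximalErgodic

section PointwiseErgodic

variable {α : Type*} [MeasurableSpace α] {μ : Measure α} {f : α → α} {g : α → ℝ}

theorem Ergodic.ae_bddAbove_birkhoffSum (hf : Ergodic f μ) (hgm : Measurable g)
    (hg : Integrable g μ) (hneg : ∫ x, g x ∂μ < 0) :
    ∀ᵐ x ∂μ, BddAbove (Set.range fun n => birkhoffSum f g n x) := by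
  set D := {x | BddAbove (Set.range fun n => birkhoffSum f g n x)}
  have hD : MeasurableSet D :=
    measurableSet_bddAbove_range fun n => hf.measurable.birkhoffSum hgm n
  have hfD : f ⁻¹' D = D := Set.ext bddAbove_birkhoffSum_apply_iff
  refine eventuallyEq_univ.mp ((hf.ae_empty_or_univ hD hfD).resolve_left fun hnull =>
    hneg.not_ge ?_)
  set A : ℕ → Set α := fun N => {x | 0 < birkhoffMax f g N x}
  have hA (N : ℕ) : MeasurableSet (A N) :=
    measurableSet_lt measurable_const (measurable_birkhoffMax hf.measurable hgm N)
  have hcover : (⋃ N, A N) =ᵐ[μ] (Set.univ : Set α) := by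
    refine eventuallyEq_univ.mpr ?_
    filter_upwards [eventuallyEq_empty.mp hnull] with x (hx : ¬ BddAbove _)
    obtain ⟨N, hN⟩ : ∃ N, 0 < birkhoffSum f g N x := by
      by_contra! h
      exact hx ⟨0, Set.forall_mem_range.mpr h⟩
    exact Set.mem_iUnion.mpr ⟨N, hN.trans_le (birkhoffSum_le_birkhoffMax le_rfl x)⟩
  have hlim := tendsto_setIntegral_of_monotone hA
    (fun _ _ h x (hx : 0 < _) => hx.trans_le (birkhoffMax_mono h x)) hg.integrableOn
  rw [setIntegral_congr_set hcover, setIntegral_univ] at hlim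
  exact ge_of_tendsto hlim (Eventually.of_forall
    (hf.toMeasurePreserving.setIntegral_birkhoffMax_pos_nonneg hgm hg))

variable [IsProbabilityMeasure μ]

theorem Ergodic.ae_eventually_birkhoffAverage_lt (hf : Ergodic f μ) (hgm : Measurable g)
    (hg : Integrable g μ) {c : ℝ} (hc : ∫ x, g x ∂μ < c) :
    ∀ᵐ x ∂μ, ∀ᶠ n in atTop, birkhoffAverage ℝ f g n x < c := by
  obtain ⟨c', hgc', hc'c⟩ := exists_between hc
  have hneg : ∫ x, (g x - c') ∂μ < 0 := by
    rw [integral_sub hg (integrable_const c')]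
    simpa using hgc'
  filter_upwards [hf.ae_bddAbove_birkhoffSum (hgm.sub measurable_const)
    (hg.sub (integrable_const c')) hneg] with x ⟨C, hC⟩
  have hsmall : ∀ᶠ n : ℕ in atTop, C / n < c - c' :=
    (tendsto_const_div_atTop_nhds_zero_nat C).eventually (gt_mem_nhds (sub_pos.mpr hc'c))
  filter_upwards [hsmall, eventually_gt_atTop 0] with n hn hn0
  have hsum : birkhoffSum f g n x - n * c' ≤ C := by
    simpa [birkhoffSum, sum_sub_distrib] using hC ⟨n, rfl⟩
  have hn0' : (0 : ℝ) < n := by exact_mod_cast hn0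
  rw [birkhoffAverage, smul_eq_mul, inv_mul_lt_iff₀ hn0']
  rw [div_lt_iff₀ hn0'] at hn
  linarith

theorem Ergodic.ae_eventually_lt_birkhoffAverage (hf : Ergodic f μ) (hgm : Measurable g)
    (hg : Integrable g μ) {c : ℝ} (hc : c < ∫ x, g x ∂μ) :
    ∀ᵐ x ∂μ, ∀ᶠ n in atTop, c < birkhoffAverage ℝ f g n x := by
  have hneg : ∫ x, (-g) x ∂μ < -c := by simpa [integral_neg] using hc
  filter_upwards [hf.ae_eventually_birkhoffAverage_lt hgm.neg hg.neg hneg] with x hx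
  filter_upwards [hx] with n hn
  rw [birkhoffAverage_neg, Pi.neg_apply, Pi.neg_apply] at hn
  linarith

theorem Ergodic.ae_tendsto_birkhoffAverage_of_measurable (hf : Ergodic f μ)
    (hgm : Measurable g) (hg : Integrable g μ) :
    ∀ᵐ x ∂μ, Tendsto (birkhoffAverage ℝ f g · x) atTop (𝓝 (∫ y, g y ∂μ)) := by
  have upper (c : ℚ) : ∀ᵐ x ∂μ, ∫ y, g y ∂μ < c →
      ∀ᶠ n in atTop, birkhoffAverage ℝ f g n x < c :=
    eventually_imp_distrib_left.mpr (hf.ae_eventually_birkhoffAverage_lt hgm hg)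
  have lower (c : ℚ) : ∀ᵐ x ∂μ, (c : ℝ) < ∫ y, g y ∂μ →
      ∀ᶠ n in atTop, (c : ℝ) < birkhoffAverage ℝ f g n x :=
    eventually_imp_distrib_left.mpr (hf.ae_eventually_lt_birkhoffAverage hgm hg)
  filter_upwards [ae_all_iff.mpr upper, ae_all_iff.mpr lower] with x hu hl
  refine tendsto_order.mpr ⟨fun b hb => ?_, fun b hb => ?_⟩
  · obtain ⟨c, hbc, hc⟩ := exists_rat_btwn hb
    exact (hl c hc).mono fun n hn => hbc.trans hn
  · obtain ⟨c, hc, hcb⟩ := exists_rat_btwn hb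
    exact (hu c hc).mono fun n hn => hn.trans hcb

theorem Ergodic.ae_tendsto_birkhoffAverage (hf : Ergodic f μ) (hg : Integrable g μ) :
    ∀ᵐ x ∂μ, Tendsto (birkhoffAverage ℝ f g · x) atTop (𝓝 (∫ y, g y ∂μ)) := by
  have hmk := hg.1.ae_eq_mk
  filter_upwards [hf.ae_tendsto_birkhoffAverage_of_measurable
      hg.1.stronglyMeasurable_mk.measurable (hg.congr hmk),
    ae_all_iff.mpr fun n => hf.quasiMeasurePreserving.birkhoffAverage_ae_eq_of_ae_eq ℝ hmk n]
    with x hx heq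
  rw [integral_congr_ae hmk]
  simpa only [heq] using hx

end PointwiseErgodic

section MeanErgodic

variable {α : Type*} [MeasurableSpace α] {μ : Measure α} [IsProbabilityMeasure μ] {f : α → α}
  {g : α → ℝ}

lemma Ergodic.tendsto_integral_abs_birkhoffAverage_sub_of_bounded (hf : Ergodic f μ)
    (hg : Integrable g μ) {C : ℝ} (hC : ∀ x, |g x| ≤ C) :
    Tendsto (fun n => ∫ x, |birkhoffAverage ℝ f g n x - ∫ y, g y ∂μ| ∂μ) atTop (𝓝 0) := by
  have hbound (n : ℕ) (x : α) : |birkhoffAverage ℝ f g n x| ≤ C := by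
    refine (abs_birkhoffAverage_le_birkhoffAverage_abs n x).trans ?_
    have hC0 : 0 ≤ C := (abs_nonneg _).trans (hC x)
    simp only [birkhoffAverage, birkhoffSum, smul_eq_mul]
    calc (n : ℝ)⁻¹ * ∑ k ∈ range n, |g (f^[k] x)| ≤ (n : ℝ)⁻¹ * (n * C) := by
          gcongr
          exact (sum_le_sum fun k _ => hC (f^[k] x)).trans_eq (by simp)
      _ ≤ C := by
          rcases n.eq_zero_or_pos with rfl | hn
          · simpa using hC0
          · rw [inv_mul_cancel_left₀ (by positivity)]
  have hint : |∫ y, g y ∂μ| ≤ C := by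
    simpa using norm_integral_le_of_norm_le_const (μ := μ) (f := g) (C := C)
      (Eventually.of_forall fun x => by simpa using hC x)
  have := tendsto_integral_of_dominated_convergence (μ := μ)
    (F := fun n x => |birkhoffAverage ℝ f g n x - ∫ y, g y ∂μ|) (f := fun _ => 0) (fun _ => C + C)
    (fun n => ((hf.toMeasurePreserving.integrable_birkhoffAverage hg n).sub
      (integrable_const _)).abs.aestronglyMeasurable)
    (integrable_const _)
    (fun n => Eventually.of_forall fun x => by
      rw [Real.norm_eq_abs, abs_abs]
      exact (abs_sub _ _).trans (add_le_add (hbound n x) hint))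
    (by
      filter_upwards [hf.ae_tendsto_birkhoffAverage hg] with x hx
      simpa using (hx.sub_const (∫ y, g y ∂μ)).abs)
  simpa using this

theorem Ergodic.tendsto_integral_abs_birkhoffAverage_sub (hf : Ergodic f μ)
    (hg : Integrable g μ) :
    Tendsto (fun n => ∫ x, |birkhoffAverage ℝ f g n x - ∫ y, g y ∂μ| ∂μ) atTop (𝓝 0) := by
  refine tendsto_order.mpr ⟨fun b hb => Eventually.of_forall fun n =>
    hb.trans_le (integral_nonneg fun _ => abs_nonneg _), fun ε hε => ?_⟩
  obtain ⟨s, hs, hgs⟩ := hg.exists_simpleFunc_integral_norm_sub_lt (ε := ε / 3) (by positivity)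
  obtain ⟨C, hC⟩ := s.exists_forall_norm_le
  filter_upwards [(hf.tendsto_integral_abs_birkhoffAverage_sub_of_bounded hs hC).eventually
    (gt_mem_nhds (show (0 : ℝ) < ε / 3 by positivity))] with n hn
  have hA (h : α → ℝ) (hh : Integrable h μ) : Integrable (birkhoffAverage ℝ f h n) μ :=
    hf.toMeasurePreserving.integrable_birkhoffAverage hh n
  have herr : ∫ x, |birkhoffAverage ℝ f (g - ⇑s) n x| ∂μ < ε / 3 :=
    (hf.toMeasurePreserving.integral_abs_birkhoffAverage_le (hg.sub hs) n).trans_lt hgs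
  have hmean : |∫ y, s y ∂μ - ∫ y, g y ∂μ| < ε / 3 := by
    rw [← integral_sub hs hg]
    refine abs_integral_le_integral_abs.trans_lt (hgs.trans_eq' (integral_congr_ae ?_))
    filter_upwards with x
    simp [Real.norm_eq_abs, abs_sub_comm]
  have hu : Integrable (fun x => |birkhoffAverage ℝ f (g - ⇑s) n x|) μ := (hA _ (hg.sub hs)).abs
  have hv : Integrable (fun x => |birkhoffAverage ℝ f s n x - ∫ y, s y ∂μ|) μ :=
    ((hA s hs).sub (integrable_const _)).abs
  calc ∫ x, |birkhoffAverage ℝ f g n x - ∫ y, g y ∂μ| ∂μ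
      ≤ ∫ x, (|birkhoffAverage ℝ f (g - ⇑s) n x| + |birkhoffAverage ℝ f s n x - ∫ y, s y ∂μ|
          + |∫ y, s y ∂μ - ∫ y, g y ∂μ|) ∂μ := by
        refine integral_mono ((hA g hg).sub (integrable_const _)).abs
          ((hu.add hv).add (integrable_const _)) fun x => ?_
        rw [birkhoffAverage_sub, Pi.sub_apply, Pi.sub_apply]
        exact (abs_add_three _ _ _).trans_eq' (by ring_nf)
    _ = ∫ x, |birkhoffAverage ℝ f (g - ⇑s) n x| ∂μ
          + ∫ x, |birkhoffAverage ℝ f s n x - ∫ y, s y ∂μ| ∂μ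
          + |∫ y, s y ∂μ - ∫ y, g y ∂μ| := by
        rw [integral_add ?_ (integrable_const _), integral_add hu hv]
        · simp
        · exact hu.add hv
    _ < ε / 3 + ε / 3 + ε / 3 := by gcongr
    _ = ε := by ring

end MeanErgodic

section Periodic

variable {α : Type*} {f : α → α} {a : ℕ → α → ℝ} {q : ℕ}

lemma apply_add_mul_of_periodic (ha : ∀ i, a (i + q) = a i ∘ f) (i m : ℕ) (x : α) :
    a (i + m * q) x = a i (f^[m] x) := by
  induction m generalizing x with
  | zero => simp
  | succ m ih => rw [add_mul, one_mul, ← add_assoc, ha, Function.comp_apply, ih,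
      Function.iterate_succ_apply]

lemma sum_range_mul_eq_birkhoffSum_of_periodic (ha : ∀ i, a (i + q) = a i ∘ f) (m : ℕ)
    (x : α) : ∑ i ∈ range (m * q), a i x = birkhoffSum f (∑ r ∈ range q, a r) m x := by
  induction m with
  | zero => simp
  | succ m ih =>
    rw [add_mul, one_mul, sum_range_add, ih, birkhoffSum_succ, Finset.sum_apply]
    congr 1
    exact sum_congr rfl fun r _ => by rw [add_comm, apply_add_mul_of_periodic ha]

lemma sum_range_eq_birkhoffSum_add_of_periodic (ha : ∀ i, a (i + q) = a i ∘ f) (n : ℕ)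
    (x : α) : ∑ i ∈ range n, a i x =
      birkhoffSum f (∑ r ∈ range q, a r) (n / q) x + ∑ r ∈ range (n % q), a r (f^[n / q] x) := by
  conv_lhs => rw [← Nat.div_add_mod' n q]
  rw [sum_range_add, sum_range_mul_eq_birkhoffSum_of_periodic ha]
  exact congrArg _ (sum_congr rfl fun r _ => by rw [add_comm, apply_add_mul_of_periodic ha])

lemma abs_inv_mul_sum_range_sub_le_of_periodic (ha : ∀ i, a (i + q) = a i ∘ f) (hq : 0 < q)
    (c : ℝ) (n : ℕ) (x : α) :
    |(n : ℝ)⁻¹ * ∑ i ∈ range n, a i x - (q : ℝ)⁻¹ * c| ≤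
      ((n / q : ℕ) : ℝ) / n * |birkhoffAverage ℝ f (∑ r ∈ range q, a r) (n / q) x - c|
        + |((n / q : ℕ) : ℝ) / n - (q : ℝ)⁻¹| * |c|
        + (n : ℝ)⁻¹ * ∑ r ∈ range q, |a r (f^[n / q] x)| := by
  set m := n / q
  set R := ∑ r ∈ range (n % q), a r (f^[m] x)
  have hR : |R| ≤ ∑ r ∈ range q, |a r (f^[m] x)| :=
    (abs_sum_le_sum_abs _ _).trans (sum_le_sum_of_subset_of_nonneg
      (range_subset_range.mpr (Nat.mod_lt n hq).le) fun _ _ _ => abs_nonneg _)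
  have hsplit : (n : ℝ)⁻¹ * ∑ i ∈ range n, a i x - (q : ℝ)⁻¹ * c =
      (m : ℝ) / n * (birkhoffAverage ℝ f (∑ r ∈ range q, a r) m x - c)
        + ((m : ℝ) / n - (q : ℝ)⁻¹) * c + (n : ℝ)⁻¹ * R := by
    rw [sum_range_eq_birkhoffSum_add_of_periodic ha, ← natCast_mul_birkhoffAverage]
    ring
  rw [hsplit]
  refine (abs_add_three _ _ _).trans ?_
  rw [abs_mul, abs_mul, abs_mul, abs_of_nonneg (by positivity : (0 : ℝ) ≤ (m : ℝ) / n),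
    abs_of_nonneg (by positivity : (0 : ℝ) ≤ (n : ℝ)⁻¹)]
  gcongr

variable [MeasurableSpace α] {μ : Measure α} [IsProbabilityMeasure μ]

theorem Ergodic.ae_tendsto_inv_mul_sum_range_of_periodic (hf : Ergodic f μ) (hq : 0 < q)
    (ha : ∀ i, a (i + q) = a i ∘ f) (hai : ∀ i, Integrable (a i) μ) :
    ∀ᵐ x ∂μ, Tendsto (fun n : ℕ => (n : ℝ)⁻¹ * ∑ i ∈ range n, a i x) atTop
      (𝓝 ((q : ℝ)⁻¹ * ∑ r ∈ range q, ∫ x, a r x ∂μ)) := by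
  set G := ∑ r ∈ range q, a r
  set c := ∑ r ∈ range q, ∫ x, a r x ∂μ
  have hG : Integrable G μ := integrable_finsetSum' _ fun r _ => hai r
  have hGc : ∫ x, G x ∂μ = c := by
    simp only [G, c, Finset.sum_apply]
    exact integral_finsetSum _ fun r _ => hai r
  have hH : Integrable (fun x => ∑ r ∈ range q, |a r x|) μ :=
    integrable_finsetSum _ fun r _ => (hai r).abs
  have hm := Nat.tendsto_div_const_atTop hq.ne'
  have hratio := tendsto_natCast_div_div_atTop hq
  filter_upwards [hf.ae_tendsto_birkhoffAverage hG, hf.ae_tendsto_birkhoffAverage hH]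
    with x hxG hxH
  rw [hGc] at hxG
  have htail : Tendsto (fun n : ℕ => (n : ℝ)⁻¹ * ∑ r ∈ range q, |a r (f^[n / q] x)|) atTop
      (𝓝 0) := by
    refine squeeze_zero' (Eventually.of_forall fun n => by positivity)
      ((eventually_ge_atTop q).mono fun n hn => ?_)
      ((tendsto_inv_mul_apply_iterate_of_tendsto_birkhoffAverage hxH).comp hm)
    have hm0 : (0 : ℝ) < (n / q : ℕ) := by exact_mod_cast Nat.div_pos hn hq
    exact mul_le_mul_of_nonneg_right (inv_anti₀ hm0 (by exact_mod_cast Nat.div_le_self n q))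
      (by positivity)
  have hbound := ((hratio.mul ((hxG.sub_const c).abs.comp hm)).add
    ((hratio.sub_const (q : ℝ)⁻¹).abs.mul_const |c|)).add htail
  simp only [sub_self, abs_zero, mul_zero, zero_mul, add_zero] at hbound
  exact tendsto_iff_norm_sub_tendsto_zero.mpr (squeeze_zero (fun n => norm_nonneg _)
    (fun n => abs_inv_mul_sum_range_sub_le_of_periodic ha hq c n x) hbound)

theorem Ergodic.tendsto_integral_abs_inv_mul_sum_range_sub_of_periodic (hf : Ergodic f μ)
    (hq : 0 < q) (ha : ∀ i, a (i + q) = a i ∘ f) (hai : ∀ i, Integrable (a i) μ) :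
    Tendsto (fun n : ℕ => ∫ x, |(n : ℝ)⁻¹ * ∑ i ∈ range n, a i x
      - (q : ℝ)⁻¹ * ∑ r ∈ range q, ∫ x, a r x ∂μ| ∂μ) atTop (𝓝 0) := by
  set G := ∑ r ∈ range q, a r
  set c := ∑ r ∈ range q, ∫ x, a r x ∂μ
  set H := fun x => ∑ r ∈ range q, |a r x|
  have hG : Integrable G μ := integrable_finsetSum' _ fun r _ => hai r
  have hGc : ∫ x, G x ∂μ = c := by
    simp only [G, c, Finset.sum_apply]
    exact integral_finsetSum _ fun r _ => hai r
  have hH : Integrable H μ := integrable_finsetSum _ fun r _ => (hai r).abs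
  have hm := Nat.tendsto_div_const_atTop hq.ne'
  have hratio := tendsto_natCast_div_div_atTop hq
  have hL1 := hf.tendsto_integral_abs_birkhoffAverage_sub hG
  rw [hGc] at hL1
  have hbound := ((hratio.mul (hL1.comp hm)).add
    ((hratio.sub_const (q : ℝ)⁻¹).abs.mul_const |c|)).add
    (tendsto_inv_atTop_nhds_zero_nat.mul_const (∫ x, H x ∂μ))
  simp only [sub_self, abs_zero, mul_zero, zero_mul, add_zero] at hbound
  refine squeeze_zero (fun n => integral_nonneg fun x => abs_nonneg _) (fun n => ?_) hbound
  have hmp := hf.toMeasurePreserving.iterate (n / q)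
  have hHn : Integrable (fun x => H (f^[n / q] x)) μ := hmp.integrable_comp_of_integrable hH
  have hAG : Integrable (fun x => |birkhoffAverage ℝ f G (n / q) x - c|) μ :=
    ((hf.toMeasurePreserving.integrable_birkhoffAverage hG (n / q)).sub (integrable_const c)).abs
  calc ∫ x, |(n : ℝ)⁻¹ * ∑ i ∈ range n, a i x - (q : ℝ)⁻¹ * c| ∂μ
      ≤ ∫ x, (((n / q : ℕ) : ℝ) / n * |birkhoffAverage ℝ f G (n / q) x - c|
          + |((n / q : ℕ) : ℝ) / n - (q : ℝ)⁻¹| * |c| + (n : ℝ)⁻¹ * H (f^[n / q] x)) ∂μ :=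
        integral_mono_of_nonneg (Eventually.of_forall fun x => abs_nonneg _)
          (((hAG.const_mul _).add (integrable_const _)).add (hHn.const_mul _))
          (Eventually.of_forall fun x => abs_inv_mul_sum_range_sub_le_of_periodic ha hq c n x)
    _ = _ := by
        rw [integral_add ?_ (hHn.const_mul _), integral_add (hAG.const_mul _) (integrable_const _),
          integral_const_mul, integral_const, integral_const_mul,
          hmp.integral_comp_of_aestronglyMeasurable hH.1]
        · simp
        · exact (hAG.const_mul _).add (integrable_const _)

end Periodic

theorem skew_product_periodic_ergodic_theorem_general
    {M Ω : Type*} [MeasurableSpace M] [MeasurableSpace Ω] {d : ℕ}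
    (μ : Measure M) (P : Measure Ω) [IsProbabilityMeasure μ] [IsProbabilityMeasure P]
    (θ : (Fin d → ℕ) → Ω → Ω)
    (hθadd : ∀ k l : Fin d → ℕ, θ k ∘ θ l = θ (k + l))
    (hθmp : ∀ k, MeasurePreserving (θ k) P P)
    (τ : M → M) (hτ : MeasurePreserving τ μ μ)
    (q : ℕ) (hq0 : 0 < q) (hq : τ^[q] = id)
    (κ : M → Fin d → ℕ)
    (herg : ∀ᵐ t ∂μ, Ergodic (θ (∑ i ∈ Finset.range q, κ (τ^[i] t))) P)
    (F : M × Ω → ℝ) (hF : Integrable F (μ.prod P)) :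
    ∀ᵐ t ∂μ,
      (∀ᵐ ω ∂P,
        Tendsto (fun n : ℕ => (n : ℝ)⁻¹ * ∑ i ∈ Finset.range n,
            F (τ^[i] t, θ (∑ j ∈ Finset.range i, κ (τ^[j] t)) ω)) atTop
          (nhds ((q : ℝ)⁻¹ * ∑ ν ∈ Finset.range q, ∫ ω, F (τ^[ν] t, ω) ∂P))) ∧
      Tendsto (fun n : ℕ => ∫ ω, |(n : ℝ)⁻¹ * ∑ i ∈ Finset.range n,
          F (τ^[i] t, θ (∑ j ∈ Finset.range i, κ (τ^[j] t)) ω)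
            - (q : ℝ)⁻¹ * ∑ ν ∈ Finset.range q, ∫ ω', F (τ^[ν] t, ω') ∂P| ∂P) atTop
        (nhds 0) := by
  have hslice : ∀ᵐ t ∂μ, ∀ i, Integrable (fun ω => F (τ^[i] t, ω)) P :=
    ae_all_iff.mpr fun i => (hτ.iterate i).quasiMeasurePreserving.ae hF.prod_right_ae
  filter_upwards [herg, hslice] with t hergt hslicet
  have hτq (i : ℕ) : τ^[i + q] t = τ^[i] t := by rw [Function.iterate_add_apply, hq, id]
  set k : ℕ → Fin d → ℕ := fun i => ∑ j ∈ range i, κ (τ^[j] t)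
  have hk (i : ℕ) : k (i + q) = k i + k q := by
    simp only [k]
    rw [add_comm i q, sum_range_add, add_comm]
    exact congrArg (· + _) (sum_congr rfl fun j _ => by rw [add_comm, hτq])
  set a : ℕ → Ω → ℝ := fun i ω => F (τ^[i] t, θ (k i) ω)
  have ha (i : ℕ) : a (i + q) = a i ∘ θ (k q) := by
    funext ω
    simp only [a, Function.comp_apply, hτq, hk, ← hθadd]
  have hai (i : ℕ) : Integrable (a i) P :=
    (hθmp (k i)).integrable_comp_of_integrable (hslicet i)
  have hmean : ∑ ν ∈ range q, ∫ ω, F (τ^[ν] t, ω) ∂P = ∑ r ∈ range q, ∫ ω, a r ω ∂P :=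
    sum_congr rfl fun r _ =>
      ((hθmp (k r)).integral_comp_of_aestronglyMeasurable (hslicet r).1).symm
  rw [hmean]
  exact ⟨hergt.ae_tendsto_inv_mul_sum_range_of_periodic hq0 ha hai,
    hergt.tendsto_integral_abs_inv_mul_sum_range_sub_of_periodic hq0 ha hai⟩

/-- if `τ` is periodic with period `q` and `θ_{κ_q(t)}` is ergodic for
μ-a.e. `t`, then for μ-a.e. `t` the skew product averages of `F ∈ L¹(μ ⊗ P)` converge,
`P`-a.s. and in `L¹(P)`, to the constant `(1/q) ∑_{ν<q} ∫ F(τ^[ν] t, ω) dP(ω)`. -/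
theorem skew_product_periodic_ergodic_theorem
    {M Ω : Type*} [MeasurableSpace M] [MeasurableSpace Ω] {d : ℕ}
    (μ : Measure M) (P : Measure Ω) [IsProbabilityMeasure μ] [IsProbabilityMeasure P]
    (θ : (Fin d → ℕ) → Ω → Ω)
    (hθ0 : θ 0 = id)
    (hθadd : ∀ k l : Fin d → ℕ, θ k ∘ θ l = θ (k + l))
    (hθmeas : ∀ k, Measurable (θ k))
    (hθmp : ∀ k, MeasurePreserving (θ k) P P)
    (τ : M → M) (hτ : MeasurePreserving τ μ μ)
    (q : ℕ) (hq0 : 0 < q) (hq : τ^[q] = id)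
    (κ : M → Fin d → ℕ) (hκ : Measurable κ)
    (herg : ∀ᵐ t ∂μ, Ergodic (θ (∑ i ∈ Finset.range q, κ (τ^[i] t))) P)
    (F : M × Ω → ℝ) (hF : Integrable F (μ.prod P)) :
    ∀ᵐ t ∂μ,
      (∀ᵐ ω ∂P,
        Tendsto (fun n : ℕ => (n : ℝ)⁻¹ * ∑ i ∈ Finset.range n,
            F (τ^[i] t, θ (∑ j ∈ Finset.range i, κ (τ^[j] t)) ω)) atTop
          (nhds ((q : ℝ)⁻¹ * ∑ ν ∈ Finset.range q, ∫ ω, F (τ^[ν] t, ω) ∂P))) ∧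
      Tendsto (fun n : ℕ => ∫ ω, |(n : ℝ)⁻¹ * ∑ i ∈ Finset.range n,
          F (τ^[i] t, θ (∑ j ∈ Finset.range i, κ (τ^[j] t)) ω)
            - (q : ℝ)⁻¹ * ∑ ν ∈ Finset.range q, ∫ ω', F (τ^[ν] t, ω') ∂P| ∂P) atTop
        (nhds 0) :=
  skew_product_periodic_ergodic_theorem_general μ P θ hθadd hθmp τ hτ q hq0 hq κ herg F hF
end

section
/- Let a < b be reals, μ a Borel probability measure on [a,b] absolutely continuous with respect to Lebesgue measure with continuous density, and τ: [a,b] → [a,b] continuous. Suppose that for every continuous f on [a,b], (1/n)Σ_{i=0}^{n-1} f∘τ^i converges uniformly to ∫ f dμ. Then the same uniform convergence holds for every Riemann-integrable function f on [a,b]. -/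
/-! Sandwich a Riemann-integrable `f` between continuous `g ≤ f ≤ h` whose `μ`-integrals are
within `ε` of `∫ f dμ`; the ergodic averages of `f` are then squeezed between those of `g` and
`h`, which converge uniformly by hypothesis. The continuous majorants are the Lipschitz
envelopes `x ↦ sup_y (f y - n * dist x y)`: they decrease to `f` at every continuity point of
`f`, hence `μ`-a.e. because `μ` is absolutely continuous, and dominated convergence gives
convergence of the integrals. -/

open MeasureTheory Filter Finset

noncomputable def lebesgueIcc (a b : ℝ) : Measure (Set.Icc a b) :=
  (volume : Measure ℝ).comap Subtype.val

def RiemannIntegrableOn {a b : ℝ} (f : Set.Icc a b → ℝ) : Prop :=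
  (∃ C : ℝ, ∀ x, |f x| ≤ C) ∧ lebesgueIcc a b {x | ¬ ContinuousAt f x} = 0

open Set Topology

section LipschitzEnvelope

variable {X : Type*} [PseudoMetricSpace X] {f : X → ℝ} {C : ℝ}

noncomputable def lipschitzEnvelope (f : X → ℝ) (n : ℕ) (x : X) : ℝ :=
  ⨆ y, f y - n * dist x y

lemma bddAbove_range_sub_mul_dist (hf : BddAbove (range f)) (n : ℕ) (x : X) :
    BddAbove (range fun y => f y - n * dist x y) := by
  obtain ⟨C, hC⟩ := hf
  refine ⟨C, forall_mem_range.2 fun y => ?_⟩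
  have := hC (mem_range_self y)
  have : 0 ≤ (n : ℝ) * dist x y := by positivity
  linarith

lemma le_lipschitzEnvelope (hf : BddAbove (range f)) (n : ℕ) (x : X) :
    f x ≤ lipschitzEnvelope f n x := by
  simpa [lipschitzEnvelope] using le_ciSup (bddAbove_range_sub_mul_dist hf n x) x

lemma lipschitzEnvelope_le (hC : ∀ y, f y ≤ C) (n : ℕ) (x : X) :
    lipschitzEnvelope f n x ≤ C := by
  have : Nonempty X := ⟨x⟩
  refine ciSup_le fun y => ?_
  have : 0 ≤ (n : ℝ) * dist x y := by positivity
  linarith [hC y]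

lemma lipschitzWith_lipschitzEnvelope (hf : BddAbove (range f)) (n : ℕ) :
    LipschitzWith n (lipschitzEnvelope f n) := by
  refine LipschitzWith.of_le_add_mul _ fun x x' => ?_
  have : Nonempty X := ⟨x⟩
  refine ciSup_le fun y => ?_
  have hy := le_ciSup (bddAbove_range_sub_mul_dist hf n x') y
  have : (n : ℝ) * dist x' y ≤ n * dist x y + n * dist x x' := by
    rw [← mul_add, dist_comm x x', add_comm]
    exact mul_le_mul_of_nonneg_left (dist_triangle _ _ _) n.cast_nonneg
  simp only [lipschitzEnvelope, NNReal.coe_natCast] at hy ⊢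
  linarith

lemma tendsto_lipschitzEnvelope (hf : BddAbove (range f)) {x : X} (hx : ContinuousAt f x) :
    Tendsto (fun n => lipschitzEnvelope f n x) atTop (𝓝 (f x)) := by
  refine tendsto_order.2 ⟨fun c hc => Eventually.of_forall fun n =>
    hc.trans_le (le_lipschitzEnvelope hf n x), fun c hc => ?_⟩
  obtain ⟨C, hC⟩ := hf
  obtain ⟨r, hr, hfr⟩ := Metric.continuousAt_iff.1 hx ((c - f x) / 2) (by linarith)
  -- Far from `x` the penalty `n * dist x y ≥ n * r` outweighs `C - f x` once `n ≥ (C - f x) / r`.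
  obtain ⟨N, hN⟩ := exists_nat_ge ((C - f x) / r)
  refine eventually_atTop.2 ⟨N, fun n hn => lt_of_le_of_lt (b := (f x + c) / 2) ?_ (by linarith)⟩
  have : Nonempty X := ⟨x⟩
  refine ciSup_le fun y => ?_
  have hdist : 0 ≤ (n : ℝ) * dist x y := by positivity
  rcases lt_or_ge (dist y x) r with hy | hy
  · linarith [(abs_lt.1 (hfr hy)).2]
  · have : C - f x ≤ n * dist x y := by
      calc C - f x ≤ N * r := (div_le_iff₀ hr).1 hN
        _ ≤ n * dist x y := by rw [dist_comm]; gcongr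
    linarith [hC (mem_range_self y)]

end LipschitzEnvelope

section Approximation

variable {X : Type*} [PseudoMetricSpace X] [MeasurableSpace X] [OpensMeasurableSpace X]
  {μ : Measure X} [IsFiniteMeasure μ] {f : X → ℝ} {C : ℝ}

lemma tendsto_integral_lipschitzEnvelope (hC : ∀ x, |f x| ≤ C)
    (hf : ∀ᵐ x ∂μ, ContinuousAt f x) :
    Tendsto (fun n => ∫ x, lipschitzEnvelope f n x ∂μ) atTop (𝓝 (∫ x, f x ∂μ)) := by
  have hbdd : BddAbove (range f) := ⟨C, forall_mem_range.2 fun x => (abs_le.1 (hC x)).2⟩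
  refine tendsto_integral_of_dominated_convergence (fun _ => C)
    (fun n => (lipschitzWith_lipschitzEnvelope hbdd n).continuous.aestronglyMeasurable)
    (integrable_const C) (fun n => Eventually.of_forall fun x => ?_)
    (hf.mono fun x hx => tendsto_lipschitzEnvelope hbdd hx)
  rw [Real.norm_eq_abs, abs_le]
  exact ⟨(abs_le.1 (hC x)).1.trans (le_lipschitzEnvelope hbdd n x),
    lipschitzEnvelope_le (fun y => (abs_le.1 (hC y)).2) n x⟩

lemma exists_continuous_ge_integral_lt (hC : ∀ x, |f x| ≤ C)
    (hf : ∀ᵐ x ∂μ, ContinuousAt f x) {ε : ℝ} (hε : 0 < ε) :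
    ∃ h : X → ℝ, Continuous h ∧ f ≤ h ∧ ∫ x, h x ∂μ < ∫ x, f x ∂μ + ε := by
  have hbdd : BddAbove (range f) := ⟨C, forall_mem_range.2 fun x => (abs_le.1 (hC x)).2⟩
  obtain ⟨n, hn⟩ := ((tendsto_integral_lipschitzEnvelope hC hf).eventually_lt_const
    (lt_add_of_pos_right _ hε)).exists
  exact ⟨_, (lipschitzWith_lipschitzEnvelope hbdd n).continuous, le_lipschitzEnvelope hbdd n, hn⟩

lemma exists_continuous_le_integral_gt (hC : ∀ x, |f x| ≤ C)
    (hf : ∀ᵐ x ∂μ, ContinuousAt f x) {ε : ℝ} (hε : 0 < ε) :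
    ∃ g : X → ℝ, Continuous g ∧ g ≤ f ∧ ∫ x, f x ∂μ - ε < ∫ x, g x ∂μ := by
  obtain ⟨h, hc, hle, hint⟩ := exists_continuous_ge_integral_lt (f := -f)
    (fun x => by simpa using hC x) (hf.mono fun x hx => hx.neg) hε
  refine ⟨-h, hc.neg, neg_le.1 hle, ?_⟩
  simp only [Pi.neg_apply, integral_neg] at hint ⊢
  linarith

end Approximation

lemma tendstoUniformly_const_of_sandwich {ι α : Type*} {l : Filter ι} {F : ι → α → ℝ} {c : ℝ}
    (h : ∀ ε > 0, ∃ (G H : ι → α → ℝ) (cG cH : ℝ), G ≤ F ∧ F ≤ H ∧ c - ε < cG ∧ cH < c + ε ∧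
      TendstoUniformly G (fun _ => cG) l ∧ TendstoUniformly H (fun _ => cH) l) :
    TendstoUniformly F (fun _ => c) l := by
  refine Metric.tendstoUniformly_iff.2 fun ε hε => ?_
  obtain ⟨G, H, cG, cH, hGF, hFH, hcG, hcH, hG, hH⟩ := h (ε / 2) (half_pos hε)
  filter_upwards [Metric.tendstoUniformly_iff.1 hG _ (half_pos hε),
    Metric.tendstoUniformly_iff.1 hH _ (half_pos hε)] with n hGn hHn x
  have hGx := hGn x
  have hHx := hHn x
  rw [Real.dist_eq, abs_sub_lt_iff] at hGx hHx ⊢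
  constructor <;> linarith [hGF n x, hFH n x]

lemma birkhoffAverage_mono {R α : Type*} [Field R] [LinearOrder R] [IsStrictOrderedRing R]
    {τ : α → α} {g f : α → R} (h : g ≤ f) : birkhoffAverage R τ g ≤ birkhoffAverage R τ f :=
  fun n x => smul_le_smul_of_nonneg_left (sum_le_sum fun i _ => h _) (by positivity)

theorem uniform_convergence_riemann_general
    (a b : ℝ)
    (μ : Measure (Set.Icc a b)) [IsProbabilityMeasure μ]
    (ρ : Set.Icc a b → ℝ)
    (hμ : μ = (lebesgueIcc a b).withDensity (fun x => ENNReal.ofReal (ρ x)))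
    (τ : Set.Icc a b → Set.Icc a b)
    (hcont : ∀ f : Set.Icc a b → ℝ, Continuous f →
      TendstoUniformly
        (fun (n : ℕ) (t : Set.Icc a b) => (n : ℝ)⁻¹ * ∑ i ∈ Finset.range n, f (τ^[i] t))
        (fun _ => ∫ x, f x ∂μ) atTop) :
    ∀ f : Set.Icc a b → ℝ, RiemannIntegrableOn f →
      TendstoUniformly
        (fun (n : ℕ) (t : Set.Icc a b) => (n : ℝ)⁻¹ * ∑ i ∈ Finset.range n, f (τ^[i] t))
        (fun _ => ∫ x, f x ∂μ) atTop := by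
  rintro f ⟨⟨C, hC⟩, hnull⟩
  have hae : ∀ᵐ x ∂μ, ContinuousAt f x :=
    ae_iff.2 (hμ ▸ withDensity_absolutelyContinuous _ _ hnull)
  change TendstoUniformly (birkhoffAverage ℝ τ f) _ _
  refine tendstoUniformly_const_of_sandwich fun ε hε => ?_
  obtain ⟨g, hg, hgf, hgint⟩ := exists_continuous_le_integral_gt hC hae hε
  obtain ⟨h, hh, hfh, hhint⟩ := exists_continuous_ge_integral_lt hC hae hε
  exact ⟨_, _, _, _, birkhoffAverage_mono hgf, birkhoffAverage_mono hfh, hgint, hhint,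
    hcont g hg, hcont h hh⟩

/-- if the ergodic averages of every continuous function converge
uniformly to its `μ`-integral, where `μ` is absolutely continuous with continuous
density, then the same holds for every Riemann-integrable function. -/
theorem uniform_convergence_riemann
    (a b : ℝ) (hab : a < b)
    (μ : Measure (Set.Icc a b)) [IsProbabilityMeasure μ]
    (ρ : Set.Icc a b → ℝ) (hρ : Continuous ρ)
    (hμ : μ = (lebesgueIcc a b).withDensity (fun x => ENNReal.ofReal (ρ x)))
    (τ : Set.Icc a b → Set.Icc a b) (hτ : Continuous τ)
    (hcont : ∀ f : Set.Icc a b → ℝ, Continuous f →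
      TendstoUniformly
        (fun (n : ℕ) (t : Set.Icc a b) => (n : ℝ)⁻¹ * ∑ i ∈ Finset.range n, f (τ^[i] t))
        (fun _ => ∫ x, f x ∂μ) atTop) :
    ∀ f : Set.Icc a b → ℝ, RiemannIntegrableOn f →
      TendstoUniformly
        (fun (n : ℕ) (t : Set.Icc a b) => (n : ℝ)⁻¹ * ∑ i ∈ Finset.range n, f (τ^[i] t))
        (fun _ => ∫ x, f x ∂μ) atTop :=
  uniform_convergence_riemann_general a b μ ρ hμ τ hcont
end
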